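/- (Reduction of the conjugacy problem, Theorem 6, mathematical content.) For every n ≥ 3, let U, V ∈ B_n and let A, B, C, D be positive braids such that U = C⁻¹·A and V = D·B⁻¹ in B_n. Then U and V are conjugate in B_n if and only if there exists a positive braid M such that A·M·B = C·M·D in B_n. -/

import Mathlib

namespace Braid

/-- The braid relations on `n` strands: generators `0, …, n-2` stand for `σ₁, …, σ_{n-1}`. -/
def braidRels (n : ℕ) : Set (FreeGroup (Fin (n - 1))) :=
  { r | (∃ i j : Fin (n - 1), (i : ℕ) + 2 ≤ (j : ℕ) ∧
          r = FreeGroup.of i * FreeGroup.of j * (FreeGroup.of i)⁻¹ * (FreeGroup.of j)⁻¹) ∨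
        (∃ i j : Fin (n - 1), (j : ℕ) = (i : ℕ) + 1 ∧
          r = FreeGroup.of i * FreeGroup.of j * FreeGroup.of i *
              (FreeGroup.of j * FreeGroup.of i * FreeGroup.of j)⁻¹) }

/-- The braid group `B_n`, presented by `σ₁, …, σ_{n-1}` and the braid relations. -/
abbrev BraidGroup (n : ℕ) := PresentedGroup (braidRels n)

/-- The standard generator `σ i` of `B_n` (1-indexed); junk value `1` out of range. -/
def s (n : ℕ) (i : ℕ) : BraidGroup n :=
  if h : 1 ≤ i ∧ i ≤ n - 1 then PresentedGroup.of (⟨i - 1, by omega⟩ : Fin (n - 1)) else 1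

/-- The Garside half-twist `Δ = (σ₁)(σ₂σ₁)(σ₃σ₂σ₁)⋯(σ_{n-1}σ_{n-2}⋯σ₁)` in `B_n`. -/
def halfTwist (n : ℕ) : BraidGroup n :=
  ((List.range (n - 1)).map
    (fun r => (((List.range (r + 1)).reverse).map (fun k => s n (k + 1))).prod)).prod

/-- The submonoid of positive braids of `B_n`: the monoid generated by `σ₁, …, σ_{n-1}`. -/
def positive (n : ℕ) : Submonoid (BraidGroup n) :=
  Submonoid.closure (s n '' Set.Icc 1 (n - 1))

/-- The extended generators `ₐσᵢ` of `B_n`: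
`₀σᵢ = σᵢ`, `₁σᵢ = Δ·σᵢ⁻¹`, `₂σᵢ = σ_{n-i}`, `₃σᵢ = Δ·σ_{n-i}⁻¹`. -/
def es (n : ℕ) (a : ZMod 4) (i : ℕ) : BraidGroup n :=
  if a = 0 then s n i
  else if a = 1 then halfTwist n * (s n i)⁻¹
  else if a = 2 then s n (n - i)
  else halfTwist n * (s n (n - i))⁻¹

/-- An extended letter `ₐσᵢ^{e}` is coded as `(a, i, e)`, where `e = true` means
exponent `+1` (a positive letter) and `e = false` means exponent `-1` (a negative letter). -/
abbrev ELetter : Type := ZMod 4 × ℕ × Bool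

/-- The element of `B_n` represented by an extended letter. -/
def eletterProd (n : ℕ) (x : ELetter) : BraidGroup n :=
  if x.2.2 then es n x.1 x.2.1 else (es n x.1 x.2.1)⁻¹

/-- The element of `B_n` represented by an extended word. -/
def eprod (n : ℕ) (W : List ELetter) : BraidGroup n :=
  (W.map (eletterProd n)).prod

/-- The element of `B_n` represented by a positive extended word,
coded as a list of pairs `(a, i)` standing for the letters `ₐσᵢ` (no inverses). -/
def eposProd (n : ℕ) (P : List (ZMod 4 × ℕ)) : BraidGroup n :=
  (P.map (fun x => es n x.1 x.2)).prod

/-- A standard word is a list of pairs `(i, e)` standing for the letters `σᵢ^{±1}`;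
this is the element of `B_n` it represents. -/
def sprod (n : ℕ) (V : List (ℕ × Bool)) : BraidGroup n :=
  (V.map (fun x => if x.2 then s n x.1 else (s n x.1)⁻¹)).prod

/-- The element of `B_n` represented by a positive standard word (a list of indices). -/
def posProd (n : ℕ) (P : List ℕ) : BraidGroup n :=
  (P.map (s n)).prod

/-- The shift `sh(d, ₐσⱼ^{e}) = ₍ₐ₊d₎σⱼ^{f}`, with `f = e` if `d ∈ {0,2}` and
`f = -e` if `d ∈ {1,3}`. -/
def sh (d : ZMod 4) (x : ELetter) : ELetter :=
  (x.1 + d, x.2.1, if d = 0 ∨ d = 2 then x.2.2 else !x.2.2)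

/-- One step of the inductive definition of the separation of an extended word. -/
def sepStep (t : List (ZMod 4) × ZMod 4 × List (ZMod 4)) (x : ELetter) :
    List (ZMod 4) × ZMod 4 × List (ZMod 4) :=
  if x.2.2 = false then (t.1, t.2.1, t.2.2 ++ [-t.2.1])
  else
    match t.2.2 with
    | [] => (t.1 ++ [0], t.2.1, [])
    | a :: L'' => (t.1 ++ [a + t.2.1 + 1], t.2.1 + 2, L'' ++ [3 - t.2.1])

/-- The separation `(L, δ, L')` of an extended word, defined inductively from the left. -/
def separation (W : List ELetter) : List (ZMod 4) × ZMod 4 × List (ZMod 4) :=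
  W.foldl sepStep ([], 0, [])

/-- The bishift `SH2(L, δ, L', W)`: the first `|L|` letters of `W` are shifted by the
entries of `L`, the remaining letters are shifted by `δ +` the entries of `L'`. -/
def SH2 (L : List (ZMod 4)) (δ : ZMod 4) (L' : List (ZMod 4)) (W : List ELetter) :
    List ELetter :=
  List.zipWith sh L (W.take L.length) ++
    List.zipWith sh (L'.map (fun d => δ + d)) (W.drop L.length)


/-! ### Auxiliary Garside-theoretic lemmas -/

section Aux
variable {n : ℕ}

lemma mk_rel_eq_one {r : FreeGroup (Fin (n - 1))} (hr : r ∈ braidRels n) :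
    PresentedGroup.mk (braidRels n) r = 1 := by
  change (QuotientGroup.mk r : BraidGroup n) = 1
  rw [QuotientGroup.eq_one_iff]
  exact Subgroup.subset_normalClosure hr

lemma s_apply {i : ℕ} (h1 : 1 ≤ i) (h2 : i ≤ n - 1) :
    s n i = PresentedGroup.of (⟨i - 1, by omega⟩ : Fin (n - 1)) := dif_pos ⟨h1, h2⟩

lemma s_out {i : ℕ} (h : ¬ (1 ≤ i ∧ i ≤ n - 1)) : s n i = 1 := dif_neg h

lemma mk_of_eq_s (x : Fin (n - 1)) :
    PresentedGroup.mk (braidRels n) (FreeGroup.of x) = s n ((x : ℕ) + 1) := by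
  have h2 : (x : ℕ) + 1 ≤ n - 1 := by omega
  rw [s_apply (by omega) h2]
  show PresentedGroup.of x = _
  have : (⟨(x : ℕ) + 1 - 1, by omega⟩ : Fin (n - 1)) = x := Fin.ext (by simp)
  rw [this]

lemma s_comm {i j : ℕ} (h : i + 2 ≤ j) : s n i * s n j = s n j * s n i := by
  by_cases hi : 1 ≤ i ∧ i ≤ n - 1
  · by_cases hj : 1 ≤ j ∧ j ≤ n - 1
    · obtain ⟨hi1, hi2⟩ := hi; obtain ⟨hj1, hj2⟩ := hj
      have hia : i - 1 < n - 1 := by omega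
      have hja : j - 1 < n - 1 := by omega
      have hrel : FreeGroup.of (⟨i - 1, hia⟩ : Fin (n - 1)) * FreeGroup.of (⟨j - 1, hja⟩ : Fin (n - 1)) *
          (FreeGroup.of (⟨i - 1, hia⟩ : Fin (n - 1)))⁻¹ * (FreeGroup.of (⟨j - 1, hja⟩ : Fin (n - 1)))⁻¹
          ∈ braidRels n :=
        Or.inl ⟨⟨i - 1, hia⟩, ⟨j - 1, hja⟩, by simp; omega, rfl⟩
      have h1 := mk_rel_eq_one hrel
      rw [map_mul, map_mul, map_mul, map_inv, map_inv, mul_inv_eq_one,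
        mul_inv_eq_iff_eq_mul] at h1
      rw [s_apply hi1 hi2, s_apply hj1 hj2]
      exact h1
    · rw [s_out hj, mul_one, one_mul]
  · rw [s_out hi, mul_one, one_mul]

lemma s_braid {i : ℕ} (h1 : 1 ≤ i) (h2 : i + 1 ≤ n - 1) :
    s n i * s n (i + 1) * s n i = s n (i + 1) * s n i * s n (i + 1) := by
  have hia : i - 1 < n - 1 := by omega
  have hja : i + 1 - 1 < n - 1 := by omega
  have hrel : FreeGroup.of (⟨i - 1, hia⟩ : Fin (n - 1)) * FreeGroup.of (⟨i + 1 - 1, hja⟩ : Fin (n - 1)) *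
      FreeGroup.of (⟨i - 1, hia⟩ : Fin (n - 1)) *
      (FreeGroup.of (⟨i + 1 - 1, hja⟩ : Fin (n - 1)) * FreeGroup.of (⟨i - 1, hia⟩ : Fin (n - 1)) *
        FreeGroup.of (⟨i + 1 - 1, hja⟩ : Fin (n - 1)))⁻¹ ∈ braidRels n :=
    Or.inr ⟨⟨i - 1, hia⟩, ⟨i + 1 - 1, hja⟩, by simp; omega, rfl⟩
  have h3 := mk_rel_eq_one hrel
  rw [map_mul, map_mul, map_inv, map_mul, map_mul, mul_inv_eq_one] at h3
  rw [s_apply h1 (by omega), s_apply (by omega : 1 ≤ i + 1) h2]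
  exact h3


lemma s_mem_positive (i : ℕ) : s n i ∈ positive n := by
  by_cases h : 1 ≤ i ∧ i ≤ n - 1
  · exact Submonoid.subset_closure ⟨i, ⟨h.1, h.2⟩, rfl⟩
  · rw [s_out h]; exact one_mem _

/-- `σ_m σ_{m-1} ⋯ σ₁`. -/
def dbar (n m : ℕ) : BraidGroup n :=
  (((List.range m).reverse).map (fun k => s n (k + 1))).prod

/-- `σ₁ σ₂ ⋯ σ_m`. -/
def dfwd (n m : ℕ) : BraidGroup n :=
  ((List.range m).map (fun k => s n (k + 1))).prod

/-- The partial half twist `Δ(m) = (σ₁)(σ₂σ₁)⋯(σ_m⋯σ₁)`. -/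
def DD (n m : ℕ) : BraidGroup n :=
  ((List.range m).map (fun r => dbar n (r + 1))).prod

@[simp] lemma dbar_zero : dbar n 0 = 1 := rfl
@[simp] lemma dfwd_zero : dfwd n 0 = 1 := rfl
@[simp] lemma DD_zero : DD n 0 = 1 := rfl

lemma dbar_succ (m : ℕ) : dbar n (m + 1) = s n (m + 1) * dbar n m := by
  simp [dbar, List.range_succ]

lemma dfwd_succ (m : ℕ) : dfwd n (m + 1) = dfwd n m * s n (m + 1) := by
  simp [dfwd, List.range_succ]

lemma DD_succ (m : ℕ) : DD n (m + 1) = DD n m * dbar n (m + 1) := by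
  simp [DD, List.range_succ]

lemma dbar_mem (m : ℕ) : dbar n m ∈ positive n := by
  apply Submonoid.list_prod_mem
  intro x hx
  simp only [List.mem_map] at hx
  obtain ⟨k, -, rfl⟩ := hx
  exact s_mem_positive _

lemma DD_mem (m : ℕ) : DD n m ∈ positive n := by
  apply Submonoid.list_prod_mem
  intro x hx
  simp only [List.mem_map] at hx
  obtain ⟨k, -, rfl⟩ := hx
  exact dbar_mem _

/-- reassociation helper -/
lemma swap3 {G : Type*} [Monoid G] {a b : G} (h : a * b = b * a) (c : G) :
    a * (b * c) = b * (a * c) := by rw [← mul_assoc, h, mul_assoc]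

lemma comm_dbar {j m : ℕ} (h : m + 2 ≤ j) : s n j * dbar n m = dbar n m * s n j := by
  induction m with
  | zero => simp
  | succ m ih =>
    calc s n j * dbar n (m + 1) = s n j * (s n (m + 1) * dbar n m) := by rw [dbar_succ]
      _ = s n (m + 1) * (s n j * dbar n m) := swap3 (s_comm (by omega : m + 1 + 2 ≤ j)).symm _
      _ = s n (m + 1) * (dbar n m * s n j) := by rw [ih (by omega)]
      _ = dbar n (m + 1) * s n j := by rw [dbar_succ, mul_assoc]

lemma comm_dfwd {j m : ℕ} (h : m + 2 ≤ j) : s n j * dfwd n m = dfwd n m * s n j := by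
  induction m with
  | zero => simp
  | succ m ih =>
    calc s n j * dfwd n (m + 1) = s n j * dfwd n m * s n (m + 1) := by
          rw [dfwd_succ, mul_assoc]
      _ = dfwd n m * s n j * s n (m + 1) := by rw [ih (by omega)]
      _ = dfwd n m * (s n (m + 1) * s n j) := by
          rw [mul_assoc, ← s_comm (by omega : m + 1 + 2 ≤ j)]
      _ = dfwd n (m + 1) * s n j := by rw [dfwd_succ, mul_assoc]

lemma comm_DD {j m : ℕ} (h : m + 2 ≤ j) : s n j * DD n m = DD n m * s n j := by
  induction m with
  | zero => simp
  | succ m ih =>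
    calc s n j * DD n (m + 1) = s n j * DD n m * dbar n (m + 1) := by
          rw [DD_succ, mul_assoc]
      _ = DD n m * s n j * dbar n (m + 1) := by rw [ih (by omega)]
      _ = DD n m * (dbar n (m + 1) * s n j) := by rw [mul_assoc, comm_dbar (by omega)]
      _ = DD n (m + 1) * s n j := by rw [DD_succ, mul_assoc]

lemma dbar_shift {i m : ℕ} (h1 : 1 ≤ i) (h2 : i + 1 ≤ m) (h3 : m ≤ n - 1) :
    dbar n m * s n (i + 1) = s n i * dbar n m := by
  induction m with
  | zero => omega
  | succ m ih =>
    rcases Nat.lt_or_ge (i + 1) (m + 1) with hlt | hge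
    · calc dbar n (m + 1) * s n (i + 1) = s n (m + 1) * (dbar n m * s n (i + 1)) := by
            rw [dbar_succ, mul_assoc]
        _ = s n (m + 1) * (s n i * dbar n m) := by rw [ih (by omega) (by omega)]
        _ = s n i * (s n (m + 1) * dbar n m) := swap3 (s_comm (by omega : i + 2 ≤ m + 1)).symm _
        _ = s n i * dbar n (m + 1) := by rw [dbar_succ]
    · have him : i = m := by omega
      obtain ⟨k, rfl⟩ : ∃ k, i = k + 1 := ⟨i - 1, by omega⟩
      have hmk : m = k + 1 := him.symm
      subst hmk
      have hb := s_braid (n := n) (by omega : 1 ≤ k + 1) (by omega : k + 1 + 1 ≤ n - 1)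
      calc dbar n (k + 1 + 1) * s n (k + 1 + 1)
          = s n (k + 1 + 1) * (s n (k + 1) * (dbar n k * s n (k + 1 + 1))) := by
            rw [dbar_succ, dbar_succ]; simp only [mul_assoc]
        _ = s n (k + 1 + 1) * (s n (k + 1) * (s n (k + 1 + 1) * dbar n k)) := by
            rw [comm_dbar (by omega : k + 2 ≤ k + 1 + 1)]
        _ = s n (k + 1 + 1) * s n (k + 1) * s n (k + 1 + 1) * dbar n k := by
            simp only [mul_assoc]
        _ = s n (k + 1) * s n (k + 1 + 1) * s n (k + 1) * dbar n k := by rw [← hb]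
        _ = s n (k + 1) * dbar n (k + 1 + 1) := by
            rw [dbar_succ, dbar_succ]; simp only [mul_assoc]

lemma dfwd_shift {i m : ℕ} (h1 : 1 ≤ i) (h2 : i + 1 ≤ m) (h3 : m ≤ n - 1) :
    dfwd n m * s n i = s n (i + 1) * dfwd n m := by
  induction m with
  | zero => omega
  | succ m ih =>
    rcases Nat.lt_or_ge (i + 1) (m + 1) with hlt | hge
    · calc dfwd n (m + 1) * s n i = dfwd n m * (s n (m + 1) * s n i) := by
            rw [dfwd_succ, mul_assoc]
        _ = dfwd n m * (s n i * s n (m + 1)) := by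
            rw [← s_comm (by omega : i + 2 ≤ m + 1)]
        _ = dfwd n m * s n i * s n (m + 1) := by rw [mul_assoc]
        _ = s n (i + 1) * dfwd n m * s n (m + 1) := by rw [ih (by omega) (by omega)]
        _ = s n (i + 1) * dfwd n (m + 1) := by rw [dfwd_succ, mul_assoc]
    · have him : i = m := by omega
      obtain ⟨k, rfl⟩ : ∃ k, i = k + 1 := ⟨i - 1, by omega⟩
      have hmk : m = k + 1 := him.symm
      subst hmk
      have hb := s_braid (n := n) (by omega : 1 ≤ k + 1) (by omega : k + 1 + 1 ≤ n - 1)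
      calc dfwd n (k + 1 + 1) * s n (k + 1)
          = dfwd n k * (s n (k + 1) * s n (k + 1 + 1) * s n (k + 1)) := by
            rw [dfwd_succ, dfwd_succ]; simp only [mul_assoc]
        _ = dfwd n k * (s n (k + 1 + 1) * s n (k + 1) * s n (k + 1 + 1)) := by rw [hb]
        _ = dfwd n k * (s n (k + 1 + 1) * (s n (k + 1) * s n (k + 1 + 1))) := by
            simp only [mul_assoc]
        _ = s n (k + 1 + 1) * (dfwd n k * (s n (k + 1) * s n (k + 1 + 1))) :=
            swap3 (comm_dfwd (by omega : k + 2 ≤ k + 1 + 1)).symm _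
        _ = s n (k + 1 + 1) * dfwd n (k + 1 + 1) := by
            rw [dfwd_succ, dfwd_succ]; simp only [mul_assoc]

lemma DD_factor (m : ℕ) : DD n (m + 1) = dfwd n (m + 1) * DD n m := by
  induction m with
  | zero =>
    rw [DD_succ, DD_zero, dfwd_succ, dfwd_zero, dbar_succ, dbar_zero]
    simp
  | succ m ih =>
    calc DD n (m + 1 + 1) = DD n (m + 1) * dbar n (m + 1 + 1) := DD_succ _
      _ = dfwd n (m + 1) * (DD n m * (s n (m + 1 + 1) * dbar n (m + 1))) := by
          rw [ih, dbar_succ]; simp only [mul_assoc]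
      _ = dfwd n (m + 1) * (s n (m + 1 + 1) * (DD n m * dbar n (m + 1))) := by
          rw [swap3 (comm_DD (by omega : m + 2 ≤ m + 1 + 1)).symm]
      _ = dfwd n (m + 1 + 1) * DD n (m + 1) := by
          rw [dfwd_succ (m + 1), dfwd_succ m, DD_succ m]; simp only [mul_assoc]

lemma DD_shift : ∀ m i : ℕ, 1 ≤ i → i ≤ m → m ≤ n - 1 →
    DD n m * s n i = s n (m + 1 - i) * DD n m := by
  intro m
  induction m with
  | zero => omega
  | succ m ih =>
    intro i h1 h2 h3
    rcases Nat.lt_or_ge i (m + 1) with hlt | hge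
    · have e1 : m + 1 - i + 1 = m + 1 + 1 - i := by omega
      calc DD n (m + 1) * s n i = dfwd n (m + 1) * (DD n m * s n i) := by
            rw [DD_factor]; simp only [mul_assoc]
        _ = dfwd n (m + 1) * (s n (m + 1 - i) * DD n m) := by
            rw [ih i h1 (by omega) (by omega)]
        _ = dfwd n (m + 1) * s n (m + 1 - i) * DD n m := by rw [mul_assoc]
        _ = s n (m + 1 - i + 1) * dfwd n (m + 1) * DD n m := by
            rw [dfwd_shift (by omega : 1 ≤ m + 1 - i) (by omega : m + 1 - i + 1 ≤ m + 1) h3]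
        _ = s n (m + 1 + 1 - i) * DD n (m + 1) := by
            rw [e1, DD_factor, mul_assoc]
    · have him : i = m + 1 := by omega
      subst him
      have e1 : m + 1 + 1 - (m + 1) = 1 := by omega
      rw [e1]
      rcases Nat.eq_zero_or_pos m with hm | hm
      · subst hm
        rw [DD_succ, DD_zero, dbar_succ, dbar_zero]
        simp
      · have e2 : m + 1 - m = 1 := by omega
        calc DD n (m + 1) * s n (m + 1) = DD n m * (dbar n (m + 1) * s n (m + 1)) := by
              rw [DD_succ, mul_assoc]
          _ = DD n m * (s n m * dbar n (m + 1)) := by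
              rw [dbar_shift (by omega : 1 ≤ m) (by omega : m + 1 ≤ m + 1) (by omega)]
          _ = DD n m * s n m * dbar n (m + 1) := by rw [mul_assoc]
          _ = s n 1 * DD n m * dbar n (m + 1) := by
              rw [ih m (by omega) le_rfl (by omega), e2]
          _ = s n 1 * DD n (m + 1) := by rw [DD_succ, mul_assoc]

lemma dbar_end (m : ℕ) : ∃ Q ∈ positive n, dbar n (m + 1) = Q * s n 1 := by
  induction m with
  | zero => exact ⟨1, one_mem _, by rw [dbar_succ, dbar_zero]; simp⟩
  | succ m ih =>
    obtain ⟨Q, hQ, hQe⟩ := ih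
    exact ⟨s n (m + 1 + 1) * Q, mul_mem (s_mem_positive _) hQ,
      by rw [dbar_succ, hQe, mul_assoc]⟩

lemma DD_rdiv : ∀ m i : ℕ, 1 ≤ i → i ≤ m → m ≤ n - 1 →
    ∃ P ∈ positive n, DD n m = P * s n i := by
  intro m
  induction m with
  | zero => omega
  | succ m ih =>
    intro i h1 h2 h3
    rcases Nat.lt_or_ge 1 i with hgt | hle
    · obtain ⟨k, rfl⟩ : ∃ k, i = k + 1 := ⟨i - 1, by omega⟩
      obtain ⟨P, hP, hPe⟩ := ih k (by omega) (by omega) (by omega)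
      refine ⟨P * dbar n (m + 1), mul_mem hP (dbar_mem _), ?_⟩
      calc DD n (m + 1) = P * s n k * dbar n (m + 1) := by rw [DD_succ, hPe]
        _ = P * (s n k * dbar n (m + 1)) := by rw [mul_assoc]
        _ = P * (dbar n (m + 1) * s n (k + 1)) := by
            rw [dbar_shift (by omega : 1 ≤ k) (by omega : k + 1 ≤ m + 1) h3]
        _ = P * dbar n (m + 1) * s n (k + 1) := by rw [mul_assoc]
    · have hi1 : i = 1 := by omega
      subst hi1
      obtain ⟨Q, hQ, hQe⟩ := dbar_end (n := n) m
      exact ⟨DD n m * Q, mul_mem (DD_mem _) hQ, by rw [DD_succ, hQe, mul_assoc]⟩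


lemma halfTwist_eq : halfTwist n = DD n (n - 1) := rfl

lemma halfTwist_mem : halfTwist n ∈ positive n := by
  rw [halfTwist_eq]; exact DD_mem _

lemma halfTwist_shift {i : ℕ} (hn : 3 ≤ n) (h1 : 1 ≤ i) (h2 : i ≤ n - 1) :
    halfTwist n * s n i = s n (n - i) * halfTwist n := by
  rw [halfTwist_eq, DD_shift (n - 1) i h1 h2 le_rfl]
  congr 2
  omega

lemma halfTwist_sq_comm_s {i : ℕ} (hn : 3 ≤ n) (h1 : 1 ≤ i) (h2 : i ≤ n - 1) :
    halfTwist n ^ 2 * s n i = s n i * halfTwist n ^ 2 := by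
  have hni1 : 1 ≤ n - i := by omega
  have hni2 : n - i ≤ n - 1 := by omega
  have key : n - (n - i) = i := by omega
  rw [sq, mul_assoc, halfTwist_shift hn h1 h2, ← mul_assoc,
    halfTwist_shift hn hni1 hni2, key, mul_assoc]

lemma halfTwist_sq_central (hn : 3 ≤ n) (g : BraidGroup n) :
    Commute (halfTwist n ^ 2) g := by
  induction g using PresentedGroup.induction_on with
  | _ z =>
    induction z using FreeGroup.induction_on with
    | C1 => simpa using Commute.one_right (halfTwist n ^ 2)
    | of x =>
      show Commute _ (PresentedGroup.mk (braidRels n) (FreeGroup.of x))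
      rw [mk_of_eq_s]
      exact halfTwist_sq_comm_s hn (by omega) (by omega)
    | inv_of x hx =>
      rw [map_inv]
      exact hx.inv_right
    | mul x y hx hy =>
      rw [map_mul]
      exact hx.mul_right hy

lemma halfTwist_sq_mul_inv_s {i : ℕ} (hn : 3 ≤ n) (h1 : 1 ≤ i) (h2 : i ≤ n - 1) :
    halfTwist n ^ 2 * (s n i)⁻¹ ∈ positive n := by
  obtain ⟨P, hP, hPe⟩ := DD_rdiv (n := n) (n - 1) i h1 h2 le_rfl
  have : halfTwist n ^ 2 * (s n i)⁻¹ = halfTwist n * P := by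
    rw [sq, halfTwist_eq, hPe]
    group
  rw [this]
  exact mul_mem halfTwist_mem hP

lemma exists_pos_rep (hn : 3 ≤ n) (X : BraidGroup n) :
    ∃ k : ℕ, (halfTwist n ^ 2) ^ k * X ∈ positive n := by
  induction X using PresentedGroup.induction_on with
  | _ z =>
    induction z using FreeGroup.induction_on with
    | C1 => exact ⟨0, by simpa using one_mem _⟩
    | of x =>
      refine ⟨0, ?_⟩
      show (halfTwist n ^ 2) ^ 0 * PresentedGroup.mk (braidRels n) (FreeGroup.of x) ∈ _
      rw [pow_zero, one_mul, mk_of_eq_s]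
      exact s_mem_positive _
    | inv_of x _ =>
      refine ⟨1, ?_⟩
      show (halfTwist n ^ 2) ^ 1 *
        PresentedGroup.mk (braidRels n) (FreeGroup.of x)⁻¹ ∈ _
      rw [pow_one, map_inv, mk_of_eq_s]
      exact halfTwist_sq_mul_inv_s hn (by omega) (by omega)
    | mul x y hx hy =>
      obtain ⟨k, hk⟩ := hx
      obtain ⟨l, hl⟩ := hy
      refine ⟨k + l, ?_⟩
      have hcomm : (halfTwist n ^ 2) ^ l * PresentedGroup.mk (braidRels n) x
          = PresentedGroup.mk (braidRels n) x * (halfTwist n ^ 2) ^ l :=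
        ((halfTwist_sq_central hn _).pow_left l).eq
      have key : (halfTwist n ^ 2) ^ (k + l) * PresentedGroup.mk (braidRels n) (x * y)
          = ((halfTwist n ^ 2) ^ k * PresentedGroup.mk (braidRels n) x) *
            ((halfTwist n ^ 2) ^ l * PresentedGroup.mk (braidRels n) y) := by
        rw [map_mul, pow_add, mul_assoc, mul_assoc, ← mul_assoc ((halfTwist n ^ 2) ^ l),
          hcomm, mul_assoc]
      rw [key]
      exact mul_mem hk hl

end Aux

/-- Reduction of the conjugacy problem (content of Theorem 6): if `A, B, C, D` are
positive braids with `U = C⁻¹·A` and `V = D·B⁻¹`, then `U` and `V` are conjugate in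
`B_n` if and only if there is a positive braid `M` with `A·M·B = C·M·D`. -/
theorem conjugacy_problem_reduction (n : ℕ) (hn : 3 ≤ n) (U V A B C D : BraidGroup n)
    (hA : A ∈ positive n) (hB : B ∈ positive n) (hC : C ∈ positive n) (hD : D ∈ positive n)
    (hU : U = C⁻¹ * A) (hV : V = D * B⁻¹) :
    (∃ X : BraidGroup n, U = X * V * X⁻¹) ↔
      (∃ M ∈ positive n, A * M * B = C * M * D) := by
  constructor
  · rintro ⟨X, hX⟩
    obtain ⟨k, hk⟩ := exists_pos_rep hn X
    set c := (halfTwist n ^ 2) ^ k with hc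
    refine ⟨c * X, hk, ?_⟩
    have hcent : ∀ g : BraidGroup n, c * g = g * c := fun g =>
      ((halfTwist_sq_central hn g).pow_left k).eq
    have hUM : U = (c * X) * V * (c * X)⁻¹ := by
      rw [mul_inv_rev, hX]
      calc X * V * X⁻¹ = c * (X * V * X⁻¹) * c⁻¹ := by
            rw [hcent (X * V * X⁻¹)]; group
        _ = c * X * V * (X⁻¹ * c⁻¹) := by group
    have key : C⁻¹ * A = (c * X) * (D * B⁻¹) * (c * X)⁻¹ := by
      rw [← hU, ← hV]; exact hUM
    have hA' : A = C * ((c * X) * (D * B⁻¹) * (c * X)⁻¹) := by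
      rw [← key]; group
    rw [hA']; group
  · rintro ⟨M, hM, he⟩
    refine ⟨M, ?_⟩
    rw [hU, hV]
    have hA' : A = C * M * D * B⁻¹ * M⁻¹ := by
      rw [← he]; group
    rw [hA']; group

end Braid
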